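/- Let I, J ⊆ ℝ be intervals and F : I × J → ℝ a function that is monotone (say, monotone increasing) in each variable separately and continuous in each variable separately. Then F is jointly continuous on I × J. -/
import Mathlib

open Set

theorem stmt_7 (a b c d : ℝ) (F : ℝ → ℝ → ℝ)
    (hmono1 : ∀ y ∈ Set.Ioo c d, MonotoneOn (fun x => F x y) (Set.Ioo a b))
    (hmono2 : ∀ x ∈ Set.Ioo a b, MonotoneOn (fun y => F x y) (Set.Ioo c d))
    (hcont1 : ∀ y ∈ Set.Ioo c d, ContinuousOn (fun x => F x y) (Set.Ioo a b))
    (hcont2 : ∀ x ∈ Set.Ioo a b, ContinuousOn (fun y => F x y) (Set.Ioo c d)) :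
    ContinuousOn (fun p : ℝ × ℝ => F p.1 p.2) (Set.Ioo a b ×ˢ Set.Ioo c d) := by
  rintro ⟨x₀, y₀⟩ ⟨hx, hy⟩
  rw [Metric.continuousWithinAt_iff]
  intro ε hε
  have hcx : ContinuousAt (fun x => F x y₀) x₀ :=
    (hcont1 y₀ hy).continuousAt (Ioo_mem_nhds hx.1 hx.2)
  rw [Metric.continuousAt_iff] at hcx
  obtain ⟨δ₁, hδ₁, h1⟩ := hcx (ε/4) (by linarith)
  set x₁ := max ((a + x₀)/2) (x₀ - δ₁/2) with hx₁def
  set x₂ := min ((x₀ + b)/2) (x₀ + δ₁/2) with hx₂def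
  have hax : a < x₀ := hx.1
  have hxb : x₀ < b := hx.2
  have hx₁lt : x₁ < x₀ := max_lt (by linarith) (by linarith)
  have hx₂gt : x₀ < x₂ := lt_min (by linarith) (by linarith)
  have hx₁mem : x₁ ∈ Ioo a b :=
    ⟨lt_of_lt_of_le (by linarith : a < (a + x₀)/2) (le_max_left _ _), lt_trans hx₁lt hxb⟩
  have hx₂mem : x₂ ∈ Ioo a b :=
    ⟨lt_trans hax hx₂gt, lt_of_le_of_lt (min_le_left _ _) (by linarith)⟩
  have hd₁ : dist x₁ x₀ < δ₁ := by
    rw [Real.dist_eq, abs_lt]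
    constructor
    · have := le_max_right ((a + x₀)/2) (x₀ - δ₁/2); linarith
    · linarith
  have hd₂ : dist x₂ x₀ < δ₁ := by
    rw [Real.dist_eq, abs_lt]
    constructor
    · linarith
    · have := min_le_right ((x₀ + b)/2) (x₀ + δ₁/2); linarith
  have hF1 : |F x₁ y₀ - F x₀ y₀| < ε/4 := by
    have := h1 hd₁; rwa [Real.dist_eq] at this
  have hF2 : |F x₂ y₀ - F x₀ y₀| < ε/4 := by
    have := h1 hd₂; rwa [Real.dist_eq] at this
  have hcy1 : ContinuousAt (fun y => F x₁ y) y₀ :=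
    (hcont2 x₁ hx₁mem).continuousAt (Ioo_mem_nhds hy.1 hy.2)
  have hcy2 : ContinuousAt (fun y => F x₂ y) y₀ :=
    (hcont2 x₂ hx₂mem).continuousAt (Ioo_mem_nhds hy.1 hy.2)
  rw [Metric.continuousAt_iff] at hcy1 hcy2
  obtain ⟨δ₂, hδ₂, h2⟩ := hcy1 (ε/4) (by linarith)
  obtain ⟨δ₃, hδ₃, h3⟩ := hcy2 (ε/4) (by linarith)
  refine ⟨min (min (x₀ - x₁) (x₂ - x₀)) (min δ₂ δ₃), by refine lt_min (lt_min ?_ ?_) (lt_min hδ₂ hδ₃) <;> linarith, ?_⟩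
  rintro ⟨x, y⟩ ⟨hxm, hym⟩ hdist
  have hdx : dist x x₀ < min (min (x₀ - x₁) (x₂ - x₀)) (min δ₂ δ₃) :=
    lt_of_le_of_lt (le_max_left _ _ |>.trans_eq (Prod.dist_eq (x := ((x : ℝ), (y : ℝ))) (y := (x₀, y₀))).symm) hdist
  have hdy : dist y y₀ < min (min (x₀ - x₁) (x₂ - x₀)) (min δ₂ δ₃) :=
    lt_of_le_of_lt (le_max_right _ _ |>.trans_eq (Prod.dist_eq (x := ((x : ℝ), (y : ℝ))) (y := (x₀, y₀))).symm) hdist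
  have hdxa : |x - x₀| < min (x₀ - x₁) (x₂ - x₀) := by
    rw [Real.dist_eq] at hdx; exact lt_of_lt_of_le hdx (min_le_left _ _)
  have hx1x : x₁ ≤ x := by
    have := abs_lt.mp (lt_of_lt_of_le hdxa (min_le_left _ _)); linarith
  have hxx2 : x ≤ x₂ := by
    have := abs_lt.mp (lt_of_lt_of_le hdxa (min_le_right _ _)); linarith
  have hdy2 : dist y y₀ < δ₂ :=
    lt_of_lt_of_le hdy (le_trans (min_le_right _ _) (min_le_left _ _))
  have hdy3 : dist y y₀ < δ₃ :=
    lt_of_lt_of_le hdy (le_trans (min_le_right _ _) (min_le_right _ _))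
  have hG1 : |F x₁ y - F x₁ y₀| < ε/4 := by
    have := h2 hdy2; rwa [Real.dist_eq] at this
  have hG2 : |F x₂ y - F x₂ y₀| < ε/4 := by
    have := h3 hdy3; rwa [Real.dist_eq] at this
  have hmlo : F x₁ y ≤ F x y := hmono1 y hym hx₁mem hxm hx1x
  have hmhi : F x y ≤ F x₂ y := hmono1 y hym hxm hx₂mem hxx2
  rw [abs_lt] at hF1 hF2 hG1 hG2
  rw [Real.dist_eq, abs_lt]
  constructor <;> simp only [] <;> [linarith; linarith]
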